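/- arXiv:1505.04269 — 2 statements merged into one kernel-verified Lean document; each statement's English description precedes it below -/
import Mathlib

section
/- For A ∈ Π_λ and the associated plane-filling GT-pattern s_{i,j}(A), one has s_{i,j}(A) = s_{i-1,j+1}(A) if and only if A_{in+j(n-1)} = 0, and s_{i,j}(A) = s_{i-1,j}(A) if and only if A_{in+(j-1)(n-1)} + ... + A_{in+j(n-1)} = k. -/
open scoped BigOperators

/-- The reference sequence `T^m`: `T^m_i = 0` for `i > mn` and `T^m_i = a_i` otherwise
(where `a` is `n`-periodic, so `a i = a_{i mod n}`). -/
def Tseq (n : ℕ) (a : ℤ → ℤ) (m : ℤ) (i : ℤ) : ℤ :=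
  if (m * n : ℤ) < i then 0 else a i

/-- Membership in the set `Π_λ`: integer sequences eventually `0` to the right,
eventually equal to the periodic sequence `a` to the left, nonnegative, and with
every sum of `n` consecutive terms at most `k = a_0 + ... + a_{n-1}`. -/
structure MemPi (n : ℕ) (a : ℤ → ℤ) (A : ℤ → ℤ) : Prop where
  eventually_zero : ∃ N : ℤ, ∀ i, N ≤ i → A i = 0
  eventually_periodic : ∃ N : ℤ, ∀ i, i ≤ N → A i = a i
  nonneg : ∀ i, 0 ≤ A i
  window : ∀ i : ℤ,
    (∑ l ∈ Finset.Icc (i - n + 1) i, A l) ≤ ∑ l ∈ Finset.Icc (0 : ℤ) ((n : ℤ) - 1), a l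

/-- The array `s_{i,j}(A)` associated with a sequence `A`:
`s_{i,j}(A) = Σ_{l ≤ in+j(n-1)} (A_l - T^{i+j}_l) - Σ_{l=in+j(n-1)+1}^{(i+j)n} T^{i+j}_l`. -/
noncomputable def sPat (n : ℕ) (a A : ℤ → ℤ) (i j : ℤ) : ℤ :=
  (∑ᶠ l : ℤ, if l ≤ i * n + j * ((n : ℤ) - 1) then A l - Tseq n a (i + j) l else 0)
    - ∑ l ∈ Finset.Icc (i * n + j * ((n : ℤ) - 1) + 1) ((i + j) * n), Tseq n a (i + j) l


/-!
Far enough to the left, `A` agrees with `a` and hence with `T^{i+j}`, so for any such cut-off `B`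
the entry `s_{i,j}(A)` is the finite expression `Σ_{B < l ≤ p} A_l - Σ_{B < l ≤ m} a_l` with
`p = in + j(n-1)` and `m = (i+j)n`. Moving to `(i-1, j+1)` lowers `p` by one and keeps `m`, so the
difference of the two entries is `A_p`; moving to `(i-1, j)` lowers both `p` and `m` by `n`, so the
difference is the window sum of `A` ending at `p` minus a full period of `a`, which is `k`.
-/

open Finset

theorem Finset.sum_Ioc_add_sum_Ioc {α M : Type*} [LinearOrder α] [LocallyFiniteOrder α]
    [AddCommMonoid M] (f : α → M) {a b c : α} (hab : a ≤ b) (hbc : b ≤ c) :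
    ∑ l ∈ Ioc a b, f l + ∑ l ∈ Ioc b c, f l = ∑ l ∈ Ioc a c, f l := by
  rw [← sum_union (Ioc_disjoint_Ioc_of_le le_rfl), Ioc_union_Ioc_eq_Ioc hab hbc]

theorem Function.Periodic.sum_Ioc_add_eq {M : Type*} [AddCancelCommMonoid M] {a : ℤ → M} {n : ℕ}
    (ha : Function.Periodic a n) (c : ℤ) :
    ∑ l ∈ Ioc c (c + n), a l = ∑ l ∈ Icc (0 : ℤ) (n - 1), a l := by
  have hsing : ∀ d e : ℤ, e = d + 1 → Ioc d e = {e} := fun d e he => by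
    rw [he, ← Icc_add_one_left_eq_Ioc, Icc_self]
  have hstep : ∀ d : ℤ, ∑ l ∈ Ioc (d + 1) (d + 1 + n), a l = ∑ l ∈ Ioc d (d + n), a l := by
    intro d
    have hleft := sum_Ioc_add_sum_Ioc a (by omega : d ≤ d + 1) (by omega : d + 1 ≤ d + 1 + n)
    have hright := sum_Ioc_add_sum_Ioc a (by omega : d ≤ d + n)
      (by omega : d + n ≤ d + 1 + n)
    rw [hsing _ _ rfl, sum_singleton] at hleft
    rw [hsing (d + n) _ (by ring), sum_singleton, ha (d + 1)] at hright
    exact add_left_cancel ((hleft.trans hright.symm).trans (add_comm _ _))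
  have hbase : ∑ l ∈ Ioc (-1 : ℤ) (-1 + n), a l = ∑ l ∈ Icc (0 : ℤ) (n - 1), a l := by
    rw [show (-1 : ℤ) = 0 - 1 by norm_num, Ioc_sub_one_left_eq_Icc, zero_sub, neg_add_eq_sub]
  induction c using Int.inductionOn' (b := -1) with
  | zero => exact hbase
  | succ d _ ih => rw [hstep, ih]
  | pred d _ ih => rw [← ih, ← hstep, sub_add_cancel]

theorem finsum_ite_le_eq_sum_Ioc {α M : Type*} [LinearOrder α] [LocallyFiniteOrder α]
    [AddCommMonoid M] {g : α → M} {B : α} (hg : ∀ l ≤ B, g l = 0) (p : α) :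
    (∑ᶠ l, if l ≤ p then g l else 0) = ∑ l ∈ Ioc B p, g l := by
  rw [finsum_eq_sum_of_support_subset _ (s := Ioc B p)]
  · exact sum_congr rfl fun l hl => if_pos (mem_Ioc.1 hl).2
  · intro l hl
    rw [Function.mem_support] at hl
    split_ifs at hl with hlp
    · exact mem_Ioc.2 ⟨not_le.1 fun hlB => hl (hg l hlB), hlp⟩
    · exact absurd rfl hl

theorem sum_Ioc_Tseq (n : ℕ) (a : ℤ → ℤ) (q B p : ℤ) :
    ∑ l ∈ Ioc B p, Tseq n a q l = ∑ l ∈ Ioc B (min p (q * n)), a l := by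
  rw [show Ioc B (min p (q * n)) = (Ioc B p).filter (fun l => ¬ q * n < l) by
    ext; simp only [mem_Ioc, mem_filter, le_min_iff, not_lt]; tauto, sum_filter]
  simp only [Tseq, ite_not]

theorem sPat_eq_sum_Ioc_sub_sum_Ioc (n : ℕ) (a A : ℤ → ℤ) (i j : ℤ) {B : ℤ}
    (hAB : ∀ l ≤ B, A l = a l) (hBp : B ≤ i * n + j * ((n : ℤ) - 1)) (hBm : B ≤ (i + j) * n) :
    sPat n a A i j = ∑ l ∈ Ioc B (i * n + j * ((n : ℤ) - 1)), A l
      - ∑ l ∈ Ioc B ((i + j) * n), a l := by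
  set p := i * n + j * ((n : ℤ) - 1)
  set m := (i + j) * (n : ℤ)
  have hTA : ∀ l ≤ B, A l - Tseq n a (i + j) l = 0 := fun l hl => by
    rw [Tseq, if_neg (by omega), hAB l hl, sub_self]
  rw [sPat, finsum_ite_le_eq_sum_Ioc hTA, Icc_add_one_left_eq_Ioc, sum_sub_distrib,
    sum_Ioc_Tseq, sum_Ioc_Tseq, min_self, sub_sub, ← sum_Ioc_add_sum_Ioc a hBm (le_refl m)]
  rcases le_total p m with hpm | hmp
  · rw [min_eq_left hpm, Ioc_self, sum_empty, add_zero, sum_Ioc_add_sum_Ioc a hBp hpm]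
  · rw [min_eq_right hmp, Ioc_self, Ioc_eq_empty_of_le hmp]

theorem sPat_sub_sPat (n : ℕ) (a A : ℤ → ℤ) (hA : ∃ N, ∀ l ≤ N, A l = a l)
    {i j i' j' p p' m m' : ℤ} (hp : i * n + j * ((n : ℤ) - 1) = p)
    (hp' : i' * n + j' * ((n : ℤ) - 1) = p') (hm : (i + j) * n = m) (hm' : (i' + j') * n = m')
    (hpp' : p' ≤ p) (hmm' : m' ≤ m) :
    sPat n a A i j - sPat n a A i' j' = ∑ l ∈ Ioc p' p, A l - ∑ l ∈ Ioc m' m, a l := by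
  obtain ⟨N, hN⟩ := hA
  set B := min N (min p' m')
  have hAB : ∀ l ≤ B, A l = a l := fun l hl => hN l (by omega)
  rw [sPat_eq_sum_Ioc_sub_sum_Ioc n a A i j hAB (by omega) (by omega),
    sPat_eq_sum_Ioc_sub_sum_Ioc n a A i' j' hAB (by omega) (by omega), hp, hp', hm, hm',
    ← sum_Ioc_add_sum_Ioc A (by omega : B ≤ p') hpp',
    ← sum_Ioc_add_sum_Ioc a (by omega : B ≤ m') hmm']
  abel

theorem stmt1_general (n : ℕ) (a : ℤ → ℤ)
    (hper : ∀ i, a (i + n) = a i)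
    (A : ℤ → ℤ) (hA : MemPi n a A) (i j : ℤ) :
    (sPat n a A i j = sPat n a A (i - 1) (j + 1) ↔ A (i * n + j * ((n : ℤ) - 1)) = 0) ∧
    (sPat n a A i j = sPat n a A (i - 1) j ↔
      (∑ l ∈ Finset.Icc (i * n + (j - 1) * ((n : ℤ) - 1)) (i * n + j * ((n : ℤ) - 1)), A l)
        = ∑ l ∈ Finset.Icc (0 : ℤ) ((n : ℤ) - 1), a l) := by
  set p := i * n + j * ((n : ℤ) - 1) with hp
  rw [← sub_eq_zero, ← sub_eq_zero (a := sPat n a A i j)]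
  constructor
  · rw [sPat_sub_sPat n a A hA.eventually_periodic hp.symm (p' := p - 1) (by ring) rfl (by ring)
      (by omega) le_rfl, Ioc_sub_one_left_eq_Icc, Icc_self, sum_singleton, Ioc_self, sum_empty,
      sub_zero]
  · rw [sPat_sub_sPat n a A hA.eventually_periodic hp.symm (p' := p - n)
      (m' := (i + j - 1) * n) (m := (i + j - 1) * n + n) (by ring) (by ring) (by ring)
      (by omega) (by omega),
      Function.Periodic.sum_Ioc_add_eq hper, sub_eq_zero,
      show i * n + (j - 1) * ((n : ℤ) - 1) = p - n + 1 by ring, Icc_add_one_left_eq_Ioc]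

/-- For `A ∈ Π_λ`: `s_{i,j}(A) = s_{i-1,j+1}(A)` iff `A_{in+j(n-1)} = 0`, and
`s_{i,j}(A) = s_{i-1,j}(A)` iff `A_{in+(j-1)(n-1)} + ... + A_{in+j(n-1)} = k`. -/
theorem stmt1 (n : ℕ) (hn : 2 ≤ n) (a : ℤ → ℤ)
    (hper : ∀ i, a (i + n) = a i) (hpos : ∀ i, 0 ≤ a i)
    (A : ℤ → ℤ) (hA : MemPi n a A) (i j : ℤ) :
    (sPat n a A i j = sPat n a A (i - 1) (j + 1) ↔ A (i * n + j * ((n : ℤ) - 1)) = 0) ∧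
    (sPat n a A i j = sPat n a A (i - 1) j ↔
      (∑ l ∈ Finset.Icc (i * n + (j - 1) * ((n : ℤ) - 1)) (i * n + j * ((n : ℤ) - 1)), A l)
        = ∑ l ∈ Finset.Icc (0 : ℤ) ((n : ℤ) - 1), a l) :=
  stmt1_general n a hper A hA i j
end

section
/- For any vertex v of Π, exactly one of the m(λ) connected components of Δ_v contains vertices (i,j) with arbitrarily large row index i, and for all sufficiently large i that component contains exactly one vertex in row i. Moreover, for any point x in the tangent cone C_v, all coordinates s_{i,j}(x) with (i,j) ∈ Δ_v and i sufficiently large are equal, and s_{i,j}(x) = s_{i,j}(v) for (i,j) ∈ Δ_v with i sufficiently small. -/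
open scoped BigOperators

noncomputable section

/-- The window sum `χ_i(x) = x_{i-n+1} + ... + x_i`. -/
def chiW (n : ℕ) (x : ℤ → ℝ) (i : ℤ) : ℝ := ∑ l ∈ Finset.Icc (i - n + 1) i, x l

/-- The level `k = a_0 + ... + a_{n-1}`. -/
def klev (n : ℕ) (a : ℤ → ℤ) : ℤ := ∑ l ∈ Finset.Icc (0 : ℤ) ((n : ℤ) - 1), a l

/-- The affine space `V` of real sequences vanishing far to the right and equal to the
(`n`-periodic) sequence `a` far to the left. -/
def Vspace (n : ℕ) (a : ℤ → ℤ) : Set (ℤ → ℝ) :=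
  {x | (∃ N : ℤ, ∀ i, N ≤ i → x i = 0) ∧ (∃ N : ℤ, ∀ i, i ≤ N → x i = (a i : ℝ))}

/-- The infinite-dimensional polyhedron `Π ⊂ V`, cut out by the inequalities `x_i ≥ 0`
and `χ_i(x) ≤ k` for all `i ∈ ℤ`. -/
def PiPoly (n : ℕ) (a : ℤ → ℤ) : Set (ℤ → ℝ) :=
  {x | x ∈ Vspace n a ∧ (∀ i, 0 ≤ x i) ∧ ∀ i, chiW n x i ≤ (klev n a : ℝ)}

/-- A face of `Π`: a nonempty intersection of `Π` with some collection of the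
hyperplanes `E_i = {x_i = 0}` and `H_i = {χ_i(x) = k}`. -/
def IsFacePi (n : ℕ) (a : ℤ → ℤ) (f : Set (ℤ → ℝ)) : Prop :=
  f.Nonempty ∧ ∃ S T : Set ℤ,
    f = PiPoly n a ∩ (⋂ i ∈ S, {x | x i = 0}) ∩ (⋂ i ∈ T, {x | chiW n x i = (klev n a : ℝ)})

/-- The reference sequence `T^m` (real valued): `0` for `i > mn`, `a_i` otherwise. -/
def TseqR (n : ℕ) (a : ℤ → ℤ) (m i : ℤ) : ℝ :=
  if (m * n : ℤ) < i then 0 else (a i : ℝ)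

/-- The plane-filling GT-pattern coordinate `s_{i,j}(x)` of a point `x ∈ V`. -/
def sPatR (n : ℕ) (a : ℤ → ℤ) (x : ℤ → ℝ) (p : ℤ × ℤ) : ℝ :=
  (∑ᶠ l : ℤ, if l ≤ p.1 * n + p.2 * ((n : ℤ) - 1) then x l - TseqR n a (p.1 + p.2) l else 0)
    - ∑ l ∈ Finset.Icc (p.1 * n + p.2 * ((n : ℤ) - 1) + 1) ((p.1 + p.2) * n),
        TseqR n a (p.1 + p.2) l

/-- Adjacency in the rotated square lattice. -/
def LatAdj (p q : ℤ × ℤ) : Prop :=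
  q = (p.1 - 1, p.2) ∨ q = (p.1 - 1, p.2 + 1) ∨ q = (p.1 + 1, p.2) ∨ q = (p.1 + 1, p.2 - 1)

/-- The equality graph `Θ(x)`: lattice-adjacent indices are joined iff the corresponding
coordinates of the plane-filling GT-pattern of `x` agree. -/
def ThetaGraph (n : ℕ) (a : ℤ → ℤ) (x : ℤ → ℝ) : SimpleGraph (ℤ × ℤ) :=
  SimpleGraph.fromRel fun p q => LatAdj p q ∧ sPatR n a x p = sPatR n a x q

/-- The shift `(i,j) ↦ (i-n+1, j+n)`. -/
def shiftPt (n : ℕ) (p : ℤ × ℤ) : ℤ × ℤ := (p.1 - (n - 1), p.2 + n)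

/-- The relation on connected components of a graph on `ℤ × ℤ` identifying a component
with its image under the shift `(i,j) ↦ (i-n+1, j+n)`. -/
def shiftRel (n : ℕ) (G : SimpleGraph (ℤ × ℤ)) :
    G.ConnectedComponent → G.ConnectedComponent → Prop :=
  fun c c' => {p | G.connectedComponentMk p = c'} =
    shiftPt n '' {p | G.connectedComponentMk p = c}

/-- The subgraph of the `n`-cycle associated to `λ`: vertices `i` and `i+1` of `ZMod n`
are joined exactly when `a_{(i+1) mod n} = 0`. -/
def cycG (n : ℕ) (a : ℤ → ℤ) : SimpleGraph (ZMod n) :=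
  SimpleGraph.fromRel fun r s => s = r + 1 ∧ a ((s.val : ℤ)) = 0

/-- `v` is a vertex of `Π`: it belongs to a minimal element of the face lattice. -/
def IsVertexPi (n : ℕ) (a : ℤ → ℤ) (v : ℤ → ℝ) : Prop :=
  ∃ f, IsFacePi n a f ∧ v ∈ f ∧ ∀ g, IsFacePi n a g → g ⊆ f → g = f

/-- The tangent cone `C_v = {v + α(x - v) : x ∈ Π, α ≥ 0}` of `Π` at `v`. -/
def coneAtPi (n : ℕ) (a : ℤ → ℤ) (v : ℤ → ℝ) : Set (ℤ → ℝ) :=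
  {y | ∃ x ∈ PiPoly n a, ∃ α : ℝ, 0 ≤ α ∧ y = v + α • (x - v)}

/-!
Up to boundary terms, `s_p(x)` is the partial sum of `x` up to the index `sIdx n p` minus the
partial sum of `a` up to `n · sLevel p`. So the step `(i,j) ↦ (i+1,j-1)` adds one entry of `x`,
the shift `(i,j) ↦ (i-n+1,j+n)` subtracts `k`, and, since `k > 0`, the value of `s` at a point
is determined by `sIdx` and determines `sLevel`.

Let `v ∈ V`. Far to the right `v = 0`, so each level is a ray along which `s` is constant and
which lies in one component of `Θ(v)`, and a component meets the right region in one level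
only. Far to the left `v = a`, and there `s_{i,j}(v) = s_{i,j}(a)` depends only on `j`, is
antitone in `j` and drops by `k` over `n` columns: a component meets the left region in fewer
than `2n` columns, hence in rows bounded above. In the strip in between a component has at most
one point for each value of `sIdx`. So a component has unbounded rows iff it contains a right
ray; these components form one shift class, and in high rows they consist of the ray only.
A point `x` of the tangent cone again lies in `V` and agrees with `v` far to the left, which
gives the last two statements.
-/

open Finset

theorem sum_Ioc_consecutive_int {M : Type*} [AddCommMonoid M] (f : ℤ → M) {a b c : ℤ}
    (hab : a ≤ b) (hbc : b ≤ c) :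
    ∑ l ∈ Ioc a b, f l + ∑ l ∈ Ioc b c, f l = ∑ l ∈ Ioc a c, f l := by
  rw [← sum_union (disjoint_left.2 fun l h₁ h₂ => by simp only [mem_Ioc] at h₁ h₂; omega),
    Ioc_union_Ioc_eq_Ioc hab hbc]

section Periodic

variable {n : ℕ} {a : ℤ → ℤ}

theorem sum_Ioc_add_eq_klev (hper : Function.Periodic a n) (t : ℤ) :
    ∑ l ∈ Ioc t (t + n), a l = klev n a := by
  have hstep : Function.Periodic (fun t : ℤ => ∑ l ∈ Ioc t (t + n), a l) 1 := fun t => by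
    -- both windows are `Ioc t (t + n + 1)` minus one endpoint, and `a (t + n + 1) = a (t + 1)`
    have h := congrArg (∑ l ∈ ·, a l)
      ((insert_Ioc_right_eq_Ioc_add_one (show t ≤ t + n by omega)).trans
        (insert_Ioc_add_one_left_eq_Ioc (show t < t + n + 1 by omega)).symm)
    rw [sum_insert (by simp), sum_insert (by simp), show t + n + 1 = t + 1 + n by ring, hper] at h
    show ∑ l ∈ Ioc (t + 1) (t + 1 + n), a l = _
    linarith
  have h := hstep.sub_int_mul_eq (x := t) (t + 1)
  simp only [Int.cast_id, mul_one, sub_add_cancel_left] at h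
  rw [← h, klev, ← Icc_add_one_left_eq_Ioc]
  norm_num [neg_add_eq_sub]

theorem sum_Ioc_add_eq_klev_real (hper : Function.Periodic a n) (t : ℤ) :
    ∑ l ∈ Ioc t (t + n), (a l : ℝ) = klev n a := by
  exact_mod_cast sum_Ioc_add_eq_klev hper t

theorem klev_le_sum_Ioc (hper : Function.Periodic a n) (hpos : ∀ i, 0 ≤ a i) {m m' : ℤ}
    (h : m < m') : (klev n a : ℝ) ≤ ∑ l ∈ Ioc (m * n) (m' * n), (a l : ℝ) := by
  have hmn : m * n + n ≤ m' * n := by nlinarith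
  rw [← sum_Ioc_add_eq_klev_real hper (m * n)]
  exact sum_le_sum_of_subset_of_nonneg (Ioc_subset_Ioc le_rfl hmn)
    fun l _ _ => by exact_mod_cast hpos l

theorem one_le_of_klev_pos (hk : 0 < klev n a) : 1 ≤ n :=
  Nat.one_le_iff_ne_zero.2 (by rintro rfl; simp [klev] at hk)

end Periodic

def sIdx (n : ℕ) (p : ℤ × ℤ) : ℤ := p.1 * n + p.2 * ((n : ℤ) - 1)

def sLevel (p : ℤ × ℤ) : ℤ := p.1 + p.2

theorem sIdx_eq_fst_add (n : ℕ) (p : ℤ × ℤ) : sIdx n p = p.1 + ((n : ℤ) - 1) * sLevel p := by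
  simp only [sIdx, sLevel]; ring

theorem eq_of_sIdx_eq_of_sLevel_eq {n : ℕ} {p q : ℤ × ℤ} (hI : sIdx n p = sIdx n q)
    (hL : sLevel p = sLevel q) : p = q := by
  have h₁ : p.1 = q.1 := by rw [sIdx_eq_fst_add, sIdx_eq_fst_add, hL] at hI; linarith
  exact Prod.ext h₁ (by simp only [sLevel] at hL; linarith)

theorem sIdx_shiftPt (n : ℕ) (p : ℤ × ℤ) : sIdx n (shiftPt n p) = sIdx n p := by
  simp only [sIdx, shiftPt]; ring

theorem sLevel_shiftPt (n : ℕ) (p : ℤ × ℤ) : sLevel (shiftPt n p) = sLevel p + 1 := by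
  simp only [sLevel, shiftPt]; ring

theorem shiftPt_injective (n : ℕ) : Function.Injective (shiftPt n) := fun p q h => by
  simp only [shiftPt, Prod.ext_iff] at h ⊢; omega

theorem latAdj_shiftPt_iff {n : ℕ} {p q : ℤ × ℤ} :
    LatAdj (shiftPt n p) (shiftPt n q) ↔ LatAdj p q := by
  simp only [LatAdj, shiftPt, Prod.ext_iff]; omega

section Pattern

variable {n : ℕ} {a : ℤ → ℤ} {x : ℤ → ℝ}

theorem sum_Ioc_TseqR_add_sum_Ioc {C L m : ℤ} (hC : C ≤ m * n) (hL : C ≤ L) :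
    ∑ l ∈ Ioc C L, TseqR n a m l + ∑ l ∈ Ioc L (m * n), TseqR n a m l
      = ∑ l ∈ Ioc C (m * n), (a l : ℝ) := by
  have hT : ∀ l ∈ Ioc C (m * n), TseqR n a m l = a l :=
    fun l hl => if_neg (by simp only [mem_Ioc] at hl; omega)
  rcases le_total L (m * n) with h | h
  · rw [sum_Ioc_consecutive_int _ hL h, sum_congr rfl hT]
  · have hT₀ : ∀ l ∈ Ioc (m * n) L, TseqR n a m l = 0 :=
      fun l hl => if_pos (by simp only [mem_Ioc] at hl; omega)
    rw [Ioc_eq_empty_of_le h, sum_empty, add_zero, ← sum_Ioc_consecutive_int _ hC h,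
      sum_congr rfl hT, sum_eq_zero hT₀, add_zero]

theorem sPatR_eq_sum {C : ℤ} (hx : ∀ l ≤ C, x l = a l) {p : ℤ × ℤ} (hCL : C ≤ sIdx n p)
    (hCm : C ≤ sLevel p * n) :
    sPatR n a x p = ∑ l ∈ Ioc C (sIdx n p), x l - ∑ l ∈ Ioc C (sLevel p * n), (a l : ℝ) := by
  have hfin : (∑ᶠ l : ℤ, if l ≤ sIdx n p then x l - TseqR n a (sLevel p) l else 0)
      = ∑ l ∈ Ioc C (sIdx n p), (x l - TseqR n a (sLevel p) l) := by
    rw [finsum_eq_sum_of_support_subset _ (s := Ioc C (sIdx n p)) fun l hl => ?_]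
    · exact sum_congr rfl fun l hl => if_pos (mem_Ioc.1 hl).2
    rw [coe_Ioc, Set.mem_Ioc]
    by_contra h
    apply hl
    split_ifs
    · rw [hx l (by omega), TseqR, if_neg (by omega), sub_self]
    · rfl
  rw [sPatR, Icc_add_one_left_eq_Ioc]
  change (∑ᶠ l : ℤ, if l ≤ sIdx n p then x l - TseqR n a (sLevel p) l else 0) -
    ∑ l ∈ Ioc (sIdx n p) (sLevel p * n), TseqR n a (sLevel p) l = _
  rw [hfin, sum_sub_distrib, ← sum_Ioc_TseqR_add_sum_Ioc hCm hCL]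
  ring

theorem sPatR_congr {y : ℤ → ℝ} {p : ℤ × ℤ} (h : ∀ l ≤ sIdx n p, x l = y l) :
    sPatR n a x p = sPatR n a y p := by
  unfold sPatR
  congr 1
  refine finsum_congr fun l => ?_
  split_ifs with hl
  · rw [h l hl]
  · rfl

theorem sPatR_sub_sPatR (hx : ∃ A, ∀ l ≤ A, x l = a l) {p q : ℤ × ℤ}
    (hI : sIdx n p ≤ sIdx n q) (hL : sLevel p ≤ sLevel q) :
    sPatR n a x q - sPatR n a x p = ∑ l ∈ Ioc (sIdx n p) (sIdx n q), x l
      - ∑ l ∈ Ioc (sLevel p * n) (sLevel q * n), (a l : ℝ) := by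
  obtain ⟨A, hA⟩ := hx
  set C := min A (min (sIdx n p) (sLevel p * n))
  have hC : ∀ l ≤ C, x l = a l := fun l hl => hA l (by omega)
  have hLn : sLevel p * n ≤ sLevel q * n := mul_le_mul_of_nonneg_right hL (by positivity)
  rw [sPatR_eq_sum hC (by omega) (by omega), sPatR_eq_sum hC (by omega) (by omega),
    ← sum_Ioc_consecutive_int x (by omega : C ≤ sIdx n p) hI,
    ← sum_Ioc_consecutive_int (fun l => (a l : ℝ)) (by omega : C ≤ sLevel p * n) hLn]
  ring

theorem sPatR_shiftPt (hper : Function.Periodic a n) (hx : ∃ A, ∀ l ≤ A, x l = a l)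
    (p : ℤ × ℤ) : sPatR n a x (shiftPt n p) = sPatR n a x p - klev n a := by
  have h := sPatR_sub_sPatR hx (sIdx_shiftPt n p).ge (sLevel_shiftPt n p ▸ (lt_add_one _).le)
  rw [sIdx_shiftPt, sLevel_shiftPt, Ioc_self, sum_empty, add_mul, one_mul,
    sum_Ioc_add_eq_klev_real hper] at h
  linarith

theorem sPatR_add_one_sub_one (hx : ∃ A, ∀ l ≤ A, x l = a l) (p : ℤ × ℤ) :
    sPatR n a x (p.1 + 1, p.2 - 1) = sPatR n a x p + x (sIdx n p + 1) := by
  have hI : sIdx n (p.1 + 1, p.2 - 1) = sIdx n p + 1 := by simp only [sIdx]; ring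
  have hL : sLevel (p.1 + 1, p.2 - 1) = sLevel p := by simp only [sLevel]; ring
  have h := sPatR_sub_sPatR (n := n) hx (q := (p.1 + 1, p.2 - 1)) (by omega) hL.ge
  rw [hI, hL, Ioc_self, sum_empty, sub_zero, ← insert_Ioc_right_eq_Ioc_add_one le_rfl, Ioc_self,
    insert_empty, sum_singleton] at h
  linarith

theorem sPatR_eq_of_sLevel_eq (hx : ∃ A, ∀ l ≤ A, x l = a l) {B : ℤ}
    (hB : ∀ l, B ≤ l → x l = 0) {p q : ℤ × ℤ} (hp : B ≤ sIdx n p) (hq : B ≤ sIdx n q)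
    (h : sLevel p = sLevel q) : sPatR n a x p = sPatR n a x q := by
  wlog hle : sIdx n p ≤ sIdx n q generalizing p q
  · exact (this hq hp h.symm (le_of_not_ge hle)).symm
  have hs := sPatR_sub_sPatR hx hle h.le
  rw [h, Ioc_self, sum_empty, sub_zero,
    sum_eq_zero fun l hl => hB l (by simp only [mem_Ioc] at hl; omega)] at hs
  linarith

theorem sLevel_eq_of_sPatR_eq (hper : Function.Periodic a n) (hpos : ∀ i, 0 ≤ a i)
    (hk : 0 < klev n a) (hx : ∃ A, ∀ l ≤ A, x l = a l) {p q : ℤ × ℤ}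
    (hI : sIdx n p = sIdx n q) (hs : sPatR n a x p = sPatR n a x q) : sLevel p = sLevel q := by
  wlog hle : sLevel p ≤ sLevel q generalizing p q
  · exact (this hI.symm hs.symm (le_of_not_ge hle)).symm
  by_contra hne
  have hd := sPatR_sub_sPatR hx hI.le hle
  rw [hI, Ioc_self, sum_empty, hs, sub_self] at hd
  have := klev_le_sum_Ioc hper hpos (lt_of_le_of_ne hle hne)
  have hk' : (0 : ℝ) < klev n a := by exact_mod_cast hk
  linarith

theorem eq_of_sPatR_eq (hper : Function.Periodic a n) (hpos : ∀ i, 0 ≤ a i)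
    (hk : 0 < klev n a) (hx : ∃ A, ∀ l ≤ A, x l = a l) {p q : ℤ × ℤ}
    (hI : sIdx n p = sIdx n q) (hs : sPatR n a x p = sPatR n a x q) : p = q :=
  eq_of_sIdx_eq_of_sLevel_eq hI (sLevel_eq_of_sPatR_eq hper hpos hk hx hI hs)

end Pattern

section Reference

variable {n : ℕ} {a : ℤ → ℤ}

theorem sPatR_self_fst_add_one (hper : Function.Periodic a n) (p : ℤ × ℤ) :
    sPatR n a (fun l => (a l : ℝ)) (p.1 + 1, p.2) = sPatR n a (fun l => (a l : ℝ)) p := by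
  have hI : sIdx n (p.1 + 1, p.2) = sIdx n p + n := by simp only [sIdx]; ring
  have hL : sLevel (p.1 + 1, p.2) = sLevel p + 1 := by simp only [sLevel]; ring
  have h := sPatR_sub_sPatR (n := n) (a := a) ⟨0, fun _ _ => rfl⟩ (p := p) (q := (p.1 + 1, p.2))
    (by omega) (by omega)
  rw [hI, hL, add_mul, one_mul, sum_Ioc_add_eq_klev_real hper, sum_Ioc_add_eq_klev_real hper,
    sub_self] at h
  linarith

theorem sPatR_self_eq_at_zero (hper : Function.Periodic a n) (p : ℤ × ℤ) :
    sPatR n a (fun l => (a l : ℝ)) p = sPatR n a (fun l => (a l : ℝ)) (0, p.2) := by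
  have h : Function.Periodic (fun i => sPatR n a (fun l => (a l : ℝ)) (i, p.2)) 1 :=
    fun i => sPatR_self_fst_add_one hper (i, p.2)
  simpa using (h.sub_int_mul_eq (x := p.1) p.1).symm

theorem snd_lt_of_sPatR_self_eq (hper : Function.Periodic a n) (hpos : ∀ i, 0 ≤ a i)
    (hk : 0 < klev n a) {p q : ℤ × ℤ}
    (h : sPatR n a (fun l => (a l : ℝ)) p = sPatR n a (fun l => (a l : ℝ)) q) :
    q.2 < p.2 + n := by
  set col := fun j : ℤ => sPatR n a (fun l => (a l : ℝ)) (0, j)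
  have hx : ∃ A, ∀ l ≤ A, (a l : ℝ) = a l := ⟨0, fun _ _ => rfl⟩
  have hanti : Antitone col := antitone_int_of_succ_le fun j => by
    have h₁ := sPatR_add_one_sub_one (n := n) hx (0, j + 1)
    have h₂ := sPatR_self_eq_at_zero hper (0 + 1, j + 1 - 1)
    have h₃ : (0 : ℝ) ≤ a (sIdx n (0, j + 1) + 1) := by exact_mod_cast hpos _
    simp only [add_sub_cancel_right] at h₁ h₂
    change col (j + 1) ≤ col j
    linarith
  have hshift : col (p.2 + n) = col p.2 - klev n a := by
    have h := sPatR_shiftPt hper hx (0, p.2)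
    rwa [sPatR_self_eq_at_zero hper] at h
  by_contra hlt
  have := hanti (not_lt.1 hlt)
  rw [sPatR_self_eq_at_zero hper p, sPatR_self_eq_at_zero hper q] at h
  have hk' : (0 : ℝ) < klev n a := by exact_mod_cast hk
  change col q.2 ≤ col (p.2 + n) at this
  change col p.2 = col q.2 at h
  linarith

end Reference

def HasUnboundedRows (G : SimpleGraph (ℤ × ℤ)) (c : G.ConnectedComponent) : Prop :=
  ∀ M : ℤ, ∃ p : ℤ × ℤ, G.connectedComponentMk p = c ∧ M ≤ p.1

section UnboundedRows

variable {n : ℕ} {G : SimpleGraph (ℤ × ℤ)} {c c' : G.ConnectedComponent}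

theorem hasUnboundedRows_iff_of_shiftRel (h : shiftRel n G c c') :
    HasUnboundedRows G c ↔ HasUnboundedRows G c' := by
  constructor
  · intro hc M
    obtain ⟨p, hp, hM⟩ := hc (M + ((n : ℤ) - 1))
    have hp' : shiftPt n p ∈ {q | G.connectedComponentMk q = c'} := h ▸ ⟨p, hp, rfl⟩
    exact ⟨shiftPt n p, hp', by simp only [shiftPt]; omega⟩
  · intro hc M
    obtain ⟨q, hq, hM⟩ := hc (M - ((n : ℤ) - 1))
    obtain ⟨p, hp, rfl⟩ : q ∈ shiftPt n '' {p | G.connectedComponentMk p = c} := h ▸ hq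
    exact ⟨p, hp, by simp only [shiftPt] at hM; omega⟩

theorem hasUnboundedRows_iff_of_eqvGen (h : Relation.EqvGen (shiftRel n G) c c') :
    HasUnboundedRows G c ↔ HasUnboundedRows G c' := by
  induction h with
  | rel _ _ h => exact hasUnboundedRows_iff_of_shiftRel h
  | refl => rfl
  | symm _ _ _ ih => exact ih.symm
  | trans _ _ _ _ _ ih₁ ih₂ => exact ih₁.trans ih₂

end UnboundedRows

section Graph

variable {n : ℕ} {a : ℤ → ℤ} {x : ℤ → ℝ}

open SimpleGraph

theorem sPatR_eq_of_connectedComponentMk_eq {p q : ℤ × ℤ}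
    (h : (ThetaGraph n a x).connectedComponentMk p = (ThetaGraph n a x).connectedComponentMk q) :
    sPatR n a x p = sPatR n a x q := by
  obtain ⟨w⟩ := ConnectedComponent.exact h
  clear h
  induction w with
  | nil => rfl
  | cons hadj _ ih =>
    obtain ⟨-, h | h⟩ := (fromRel_adj _ _ _).1 hadj
    exacts [h.2.trans ih, h.2.symm.trans ih]

theorem thetaGraph_adj_add_one_sub_one (hx : ∃ A, ∀ l ≤ A, x l = a l) {p : ℤ × ℤ}
    (h : x (sIdx n p + 1) = 0) : (ThetaGraph n a x).Adj p (p.1 + 1, p.2 - 1) := by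
  refine (fromRel_adj _ _ _).2 ⟨fun he => by simpa using congrArg Prod.fst he, Or.inl ⟨?_, ?_⟩⟩
  · exact Or.inr (Or.inr (Or.inr rfl))
  · rw [sPatR_add_one_sub_one hx, h, add_zero]

theorem connectedComponentMk_eq_of_sLevel_eq (hx : ∃ A, ∀ l ≤ A, x l = a l) {B : ℤ}
    (hB : ∀ l, B ≤ l → x l = 0) {p q : ℤ × ℤ} (hp : B ≤ sIdx n p) (hq : B ≤ sIdx n q)
    (h : sLevel p = sLevel q) :
    (ThetaGraph n a x).connectedComponentMk p = (ThetaGraph n a x).connectedComponentMk q := by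
  wlog hle : p.1 ≤ q.1 generalizing p q
  · exact (this hq hp h.symm (le_of_not_ge hle)).symm
  rw [sIdx_eq_fst_add] at hp
  have hray : ∀ i, p.1 ≤ i → (ThetaGraph n a x).connectedComponentMk (i, sLevel p - i)
      = (ThetaGraph n a x).connectedComponentMk p := by
    intro i hi
    induction i, hi using Int.leInduction with
    | base => congr 1; ext <;> simp [sLevel]
    | succ i hi ih =>
      have hL : sLevel (i, sLevel p - i) = sLevel p := by simp [sLevel]
      have hi' : B ≤ sIdx n (i, sLevel p - i) + 1 := by
        rw [sIdx_eq_fst_add, hL]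
        linarith
      have hadj := thetaGraph_adj_add_one_sub_one hx (hB _ hi')
      rw [show (i + 1, sLevel p - (i + 1)) = ((i, sLevel p - i).1 + 1, (i, sLevel p - i).2 - 1) by
        ext <;> simp; ring]
      exact (ConnectedComponent.eq.2 hadj.reachable).symm.trans ih
  rw [← hray q.1 hle]
  congr 1; ext <;> simp [sLevel] at h ⊢; linarith

theorem hasUnboundedRows_connectedComponentMk (hx : ∃ A, ∀ l ≤ A, x l = a l) {B : ℤ}
    (hB : ∀ l, B ≤ l → x l = 0) {p : ℤ × ℤ} (hp : B ≤ sIdx n p) :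
    HasUnboundedRows _ ((ThetaGraph n a x).connectedComponentMk p) := fun M => by
  set q : ℤ × ℤ := (max M p.1, sLevel p - max M p.1)
  have hL : sLevel q = sLevel p := by simp only [q, sLevel]; ring
  have hI : B ≤ sIdx n q := by
    rw [sIdx_eq_fst_add, hL]
    rw [sIdx_eq_fst_add] at hp
    linarith [le_max_right M p.1]
  exact ⟨q, connectedComponentMk_eq_of_sLevel_eq hx hB hI hp hL, le_max_left M p.1⟩

def thetaShiftIso (hper : Function.Periodic a n) (hx : ∃ A, ∀ l ≤ A, x l = a l) :
    ThetaGraph n a x ≃g ThetaGraph n a x where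
  toFun := shiftPt n
  invFun p := (p.1 + ((n : ℤ) - 1), p.2 - n)
  left_inv p := by simp [shiftPt]
  right_inv p := by simp [shiftPt]
  map_rel_iff' := by
    simp only [Equiv.coe_fn_mk, ThetaGraph, fromRel_adj, latAdj_shiftPt_iff,
      sPatR_shiftPt hper hx, sub_left_inj, (shiftPt_injective n).ne_iff, implies_true]

theorem shiftRel_connectedComponentMk (hper : Function.Periodic a n)
    (hx : ∃ A, ∀ l ≤ A, x l = a l) (p : ℤ × ℤ) :
    shiftRel n (ThetaGraph n a x) ((ThetaGraph n a x).connectedComponentMk p)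
      ((ThetaGraph n a x).connectedComponentMk (shiftPt n p)) := by
  set φ := thetaShiftIso hper hx
  ext q
  constructor
  · intro hq
    exact ⟨φ.symm q, ConnectedComponent.iso_inv_image_comp_eq_iff_eq_map.2 hq,
      φ.apply_symm_apply q⟩
  · rintro ⟨r, hr, rfl⟩
    exact ConnectedComponent.iso_image_comp_eq_map_iff_eq_comp (φ := φ).2 hr

theorem eqvGen_shiftRel_of_le_sIdx (hper : Function.Periodic a n)
    (hx : ∃ A, ∀ l ≤ A, x l = a l) {B : ℤ} (hB : ∀ l, B ≤ l → x l = 0) {p q : ℤ × ℤ}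
    (hp : B ≤ sIdx n p) (hq : B ≤ sIdx n q) :
    Relation.EqvGen (shiftRel n (ThetaGraph n a x)) ((ThetaGraph n a x).connectedComponentMk p)
      ((ThetaGraph n a x).connectedComponentMk q) := by
  wlog hle : sLevel p ≤ sLevel q generalizing p q
  · exact (this hq hp (le_of_not_ge hle)).symm
  obtain ⟨d, hd⟩ := Int.eq_ofNat_of_zero_le (sub_nonneg.2 hle)
  induction d generalizing p with
  | zero =>
    rw [connectedComponentMk_eq_of_sLevel_eq hx hB hp hq (by omega)]
    exact Relation.EqvGen.refl _
  | succ d ih =>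
    refine (Relation.EqvGen.rel _ _ (shiftRel_connectedComponentMk hper hx p)).trans _ _ _ ?_
    exact ih ((sIdx_shiftPt n p).symm ▸ hp) (by rw [sLevel_shiftPt]; omega)
      (by rw [sLevel_shiftPt]; omega)

end Graph

section Components

variable {n : ℕ} {a : ℤ → ℤ} {v : ℤ → ℝ}

theorem snd_lt_of_connectedComponentMk_eq (hper : Function.Periodic a n)
    (hpos : ∀ i, 0 ≤ a i) (hk : 0 < klev n a) {A : ℤ} (hA : ∀ l ≤ A, v l = a l)
    {p q : ℤ × ℤ}
    (h : (ThetaGraph n a v).connectedComponentMk p = (ThetaGraph n a v).connectedComponentMk q)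
    (hp : sIdx n p ≤ A) (hq : sIdx n q ≤ A) : q.2 < p.2 + n := by
  refine snd_lt_of_sPatR_self_eq hper hpos hk ?_
  rw [← sPatR_congr fun l hl => hA l (hl.trans hp), ← sPatR_congr fun l hl => hA l (hl.trans hq)]
  exact sPatR_eq_of_connectedComponentMk_eq h

theorem finite_sIdx_mem_Ioc (hper : Function.Periodic a n) (hpos : ∀ i, 0 ≤ a i)
    (hk : 0 < klev n a) (hv : ∃ A, ∀ l ≤ A, v l = a l) (c : (ThetaGraph n a v).ConnectedComponent)
    (A B : ℤ) :
    {p | (ThetaGraph n a v).connectedComponentMk p = c ∧ sIdx n p ∈ Set.Ioc A B}.Finite :=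
  Set.Finite.of_injOn (fun _ hp => hp.2) (fun _ hp _ hq hI => eq_of_sPatR_eq hper hpos hk hv hI
    (sPatR_eq_of_connectedComponentMk_eq (hp.1.trans hq.1.symm))) (Set.finite_Ioc A B)

theorem exists_snd_bounds (hper : Function.Periodic a n) (hpos : ∀ i, 0 ≤ a i)
    (hk : 0 < klev n a) (hv : v ∈ Vspace n a) (c : (ThetaGraph n a v).ConnectedComponent)
    (B : ℤ) : ∃ lo hi : ℤ, ∀ p, (ThetaGraph n a v).connectedComponentMk p = c →
      sIdx n p ≤ B → lo ≤ p.2 ∧ p.2 ≤ hi := by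
  obtain ⟨A, hA⟩ := hv.2
  have hleft : ∃ lo hi : ℤ, ∀ p, (ThetaGraph n a v).connectedComponentMk p = c →
      sIdx n p ≤ A → lo ≤ p.2 ∧ p.2 ≤ hi := by
    by_cases h : ∃ p₀, (ThetaGraph n a v).connectedComponentMk p₀ = c ∧ sIdx n p₀ ≤ A
    · obtain ⟨p₀, hp₀, hp₀A⟩ := h
      refine ⟨p₀.2 - n, p₀.2 + n, fun p hp hpA => ?_⟩
      have h₁ := snd_lt_of_connectedComponentMk_eq hper hpos hk hA (hp₀.trans hp.symm) hp₀A hpA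
      have h₂ := snd_lt_of_connectedComponentMk_eq hper hpos hk hA (hp.trans hp₀.symm) hpA hp₀A
      omega
    · push Not at h
      exact ⟨0, 0, fun p hp hpA => absurd hpA (not_le.2 (h p hp))⟩
  obtain ⟨lo, hi, hlohi⟩ := hleft
  have hmid := (finite_sIdx_mem_Ioc hper hpos hk ⟨A, hA⟩ c A B).image Prod.snd
  obtain ⟨lo', hlo'⟩ := hmid.bddBelow
  obtain ⟨hi', hhi'⟩ := hmid.bddAbove
  refine ⟨min lo lo', max hi hi', fun p hp hpB => ?_⟩
  by_cases hpA : sIdx n p ≤ A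
  · have := hlohi p hp hpA
    omega
  · have hmem : p.2 ∈ Prod.snd '' {p | (ThetaGraph n a v).connectedComponentMk p = c ∧
        sIdx n p ∈ Set.Ioc A B} := ⟨p, ⟨hp, not_le.1 hpA, hpB⟩, rfl⟩
    have := hlo' hmem
    have := hhi' hmem
    omega

theorem exists_fst_le (hper : Function.Periodic a n) (hpos : ∀ i, 0 ≤ a i)
    (hk : 0 < klev n a) (hv : v ∈ Vspace n a) (c : (ThetaGraph n a v).ConnectedComponent)
    (B : ℤ) : ∃ R : ℤ, ∀ p, (ThetaGraph n a v).connectedComponentMk p = c →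
      sIdx n p ≤ B → p.1 ≤ R := by
  obtain ⟨lo, _, hlo⟩ := exists_snd_bounds hper hpos hk hv c B
  have hn : (1 : ℤ) ≤ n := by exact_mod_cast one_le_of_klev_pos hk
  refine ⟨max 0 (B - lo * ((n : ℤ) - 1)), fun p hp hpB => ?_⟩
  have hlop := (hlo p hp hpB).1
  simp only [sIdx] at hpB
  rcases le_or_gt p.1 0 with h | h
  · exact le_max_of_le_left h
  · exact le_max_of_le_right (by nlinarith)

theorem sLevel_eq_of_connectedComponentMk_eq (hper : Function.Periodic a n)
    (hpos : ∀ i, 0 ≤ a i) (hk : 0 < klev n a) (hv : ∃ A, ∀ l ≤ A, v l = a l) {B : ℤ}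
    (hB : ∀ l, B ≤ l → v l = 0) {p q : ℤ × ℤ}
    (h : (ThetaGraph n a v).connectedComponentMk p = (ThetaGraph n a v).connectedComponentMk q)
    (hp : B ≤ sIdx n p) (hq : B ≤ sIdx n q) : sLevel p = sLevel q := by
  wlog hle : sIdx n p ≤ sIdx n q generalizing p q
  · exact (this h.symm hq hp (le_of_not_ge hle)).symm
  set p' : ℤ × ℤ := (p.1 + (sIdx n q - sIdx n p), p.2 - (sIdx n q - sIdx n p))
  have hI : sIdx n p' = sIdx n q := by simp only [p', sIdx]; ring
  have hL : sLevel p' = sLevel p := by simp only [p', sLevel]; ring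
  rw [← hL]
  refine sLevel_eq_of_sPatR_eq hper hpos hk hv hI ?_
  rw [← sPatR_eq_of_sLevel_eq hv hB hp (hI ▸ hq) hL.symm]
  exact sPatR_eq_of_connectedComponentMk_eq h

theorem exists_sIdx_le_of_fst_le (hper : Function.Periodic a n) (hpos : ∀ i, 0 ≤ a i)
    (hk : 0 < klev n a) (hv : v ∈ Vspace n a) (c : (ThetaGraph n a v).ConnectedComponent)
    (K : ℤ) : ∃ N : ℤ, ∀ p, (ThetaGraph n a v).connectedComponentMk p = c →
      p.1 ≤ N → sIdx n p ≤ K := by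
  obtain ⟨B, hB⟩ := hv.1
  obtain ⟨_, hi, hhi⟩ := exists_snd_bounds hper hpos hk hv c B
  have hright : ∃ R : ℤ, ∀ p, (ThetaGraph n a v).connectedComponentMk p = c →
      B ≤ sIdx n p → R ≤ p.1 := by
    by_cases h : ∃ p₀, (ThetaGraph n a v).connectedComponentMk p₀ = c ∧ B ≤ sIdx n p₀
    · obtain ⟨p₀, hp₀, hp₀B⟩ := h
      refine ⟨B - ((n : ℤ) - 1) * sLevel p₀, fun p hp hpB => ?_⟩
      have hL := sLevel_eq_of_connectedComponentMk_eq hper hpos hk hv.2 hB (hp.trans hp₀.symm)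
        hpB hp₀B
      rw [sIdx_eq_fst_add, hL] at hpB
      linarith
    · push Not at h
      exact ⟨0, fun p hp hpB => absurd hpB (not_le.2 (h p hp))⟩
  obtain ⟨R, hR⟩ := hright
  have hn : (1 : ℤ) ≤ n := by exact_mod_cast one_le_of_klev_pos hk
  refine ⟨min (R - 1) (min 0 (K - hi * ((n : ℤ) - 1))), fun p hp hpN => ?_⟩
  by_cases hpB : B ≤ sIdx n p
  · have := hR p hp hpB
    omega
  · have hphi := (hhi p hp (by omega)).2
    have h₁ : p.1 ≤ 0 := by omega
    have h₂ : p.1 ≤ K - hi * ((n : ℤ) - 1) := by omega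
    simp only [sIdx]
    nlinarith

theorem exists_mem_le_sIdx (hper : Function.Periodic a n) (hpos : ∀ i, 0 ≤ a i)
    (hk : 0 < klev n a) (hv : v ∈ Vspace n a) {c : (ThetaGraph n a v).ConnectedComponent}
    (hc : HasUnboundedRows _ c) (B : ℤ) :
    ∃ p, (ThetaGraph n a v).connectedComponentMk p = c ∧ B ≤ sIdx n p := by
  obtain ⟨R, hR⟩ := exists_fst_le hper hpos hk hv c B
  obtain ⟨p, hp, hpR⟩ := hc (R + 1)
  refine ⟨p, hp, ?_⟩
  by_contra h
  linarith [hR p hp (not_le.1 h).le]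

theorem exists_sLevel_of_hasUnboundedRows (hper : Function.Periodic a n)
    (hpos : ∀ i, 0 ≤ a i) (hk : 0 < klev n a) (hv : v ∈ Vspace n a)
    {c : (ThetaGraph n a v).ConnectedComponent} (hc : HasUnboundedRows _ c) :
    ∃ m N : ℤ, ∀ p : ℤ × ℤ, N ≤ p.1 →
      ((ThetaGraph n a v).connectedComponentMk p = c ↔ sLevel p = m) := by
  obtain ⟨B, hB⟩ := hv.1
  obtain ⟨R, hR⟩ := exists_fst_le hper hpos hk hv c B
  obtain ⟨p₀, hp₀, hp₀B⟩ := exists_mem_le_sIdx hper hpos hk hv hc B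
  refine ⟨sLevel p₀, max (R + 1) (B - ((n : ℤ) - 1) * sLevel p₀), fun p hpN => ⟨fun hp => ?_,
    fun hL => ?_⟩⟩
  · have hpB : B ≤ sIdx n p := by
      by_contra h
      linarith [hR p hp (not_le.1 h).le, le_of_max_le_left hpN]
    exact sLevel_eq_of_connectedComponentMk_eq hper hpos hk hv.2 hB (hp.trans hp₀.symm) hpB hp₀B
  · have hpB : B ≤ sIdx n p := by
      rw [sIdx_eq_fst_add, hL]
      linarith [le_of_max_le_right hpN]
    exact (connectedComponentMk_eq_of_sLevel_eq hv.2 hB hpB hp₀B hL).trans hp₀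

theorem exists_card_row_eq_one (hper : Function.Periodic a n) (hpos : ∀ i, 0 ≤ a i)
    (hk : 0 < klev n a) (hv : v ∈ Vspace n a) {c : (ThetaGraph n a v).ConnectedComponent}
    (hc : HasUnboundedRows _ c) : ∃ N : ℤ, ∀ i : ℤ, N ≤ i →
      Nat.card {p : ℤ × ℤ // (ThetaGraph n a v).connectedComponentMk p = c ∧ p.1 = i} = 1 := by
  obtain ⟨m, N, hN⟩ := exists_sLevel_of_hasUnboundedRows hper hpos hk hv hc
  refine ⟨N, fun i hi => Nat.card_eq_one_iff_exists.2
    ⟨⟨(i, m - i), (hN _ hi).2 (by simp [sLevel]), rfl⟩, ?_⟩⟩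
  rintro ⟨p, hp, rfl⟩
  have hL := (hN p hi).1 hp
  refine Subtype.ext (Prod.ext rfl ?_)
  simp only [sLevel] at hL ⊢
  linarith

theorem eqvGen_shiftRel_of_hasUnboundedRows (hper : Function.Periodic a n)
    (hpos : ∀ i, 0 ≤ a i) (hk : 0 < klev n a) (hv : v ∈ Vspace n a)
    {c c' : (ThetaGraph n a v).ConnectedComponent} (hc : HasUnboundedRows _ c)
    (hc' : HasUnboundedRows _ c') : Relation.EqvGen (shiftRel n (ThetaGraph n a v)) c c' := by
  obtain ⟨B, hB⟩ := hv.1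
  obtain ⟨p, rfl, hp⟩ := exists_mem_le_sIdx hper hpos hk hv hc B
  obtain ⟨q, rfl, hq⟩ := exists_mem_le_sIdx hper hpos hk hv hc' B
  exact eqvGen_shiftRel_of_le_sIdx hper hv.2 hB hp hq

theorem sPatR_eq_of_hasUnboundedRows (hper : Function.Periodic a n) (hpos : ∀ i, 0 ≤ a i)
    (hk : 0 < klev n a) (hv : v ∈ Vspace n a) {c : (ThetaGraph n a v).ConnectedComponent}
    (hc : HasUnboundedRows _ c) {x : ℤ → ℝ} (hx : x ∈ Vspace n a) :
    ∃ N : ℤ, ∀ p p' : ℤ × ℤ, (ThetaGraph n a v).connectedComponentMk p = c →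
      (ThetaGraph n a v).connectedComponentMk p' = c → N ≤ p.1 → N ≤ p'.1 →
      sPatR n a x p = sPatR n a x p' := by
  obtain ⟨m, N, hN⟩ := exists_sLevel_of_hasUnboundedRows hper hpos hk hv hc
  obtain ⟨B, hB⟩ := hx.1
  refine ⟨max N (B - ((n : ℤ) - 1) * m), fun p p' hp hp' hpN hp'N => ?_⟩
  have hL := (hN p (le_of_max_le_left hpN)).1 hp
  have hL' := (hN p' (le_of_max_le_left hp'N)).1 hp'
  refine sPatR_eq_of_sLevel_eq hx.2 hB ?_ ?_ (hL.trans hL'.symm)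
  · rw [sIdx_eq_fst_add, hL]; linarith [le_of_max_le_right hpN]
  · rw [sIdx_eq_fst_add, hL']; linarith [le_of_max_le_right hp'N]

end Components

theorem mem_Vspace_of_mem_coneAtPi {n : ℕ} {a : ℤ → ℤ} {v x : ℤ → ℝ} (hv : v ∈ Vspace n a)
    (hx : x ∈ coneAtPi n a v) : x ∈ Vspace n a := by
  obtain ⟨y, ⟨⟨⟨By, hBy⟩, Ay, hAy⟩, -⟩, α, -, rfl⟩ := hx
  obtain ⟨⟨Bv, hBv⟩, Av, hAv⟩ := hv
  refine ⟨⟨max By Bv, fun l hl => ?_⟩, min Ay Av, fun l hl => ?_⟩ <;>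
    simp only [Pi.add_apply, Pi.smul_apply, Pi.sub_apply, smul_eq_mul]
  · rw [hBy l (le_of_max_le_left hl), hBv l (le_of_max_le_right hl)]; ring
  · rw [hAy l (le_min_iff.1 hl).1, hAv l (le_min_iff.1 hl).2]; ring

theorem exists_eq_left_of_mem_coneAtPi {n : ℕ} {a : ℤ → ℤ} {v x : ℤ → ℝ}
    (hv : v ∈ Vspace n a) (hx : x ∈ coneAtPi n a v) : ∃ K, ∀ l ≤ K, x l = v l := by
  obtain ⟨y, ⟨⟨-, Ay, hAy⟩, -⟩, α, -, rfl⟩ := hx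
  obtain ⟨-, Av, hAv⟩ := hv
  refine ⟨min Ay Av, fun l hl => ?_⟩
  simp only [Pi.add_apply, Pi.smul_apply, Pi.sub_apply, smul_eq_mul]
  rw [hAy l (le_min_iff.1 hl).1, hAv l (le_min_iff.1 hl).2]; ring

theorem stmt19_general (n : ℕ) (a : ℤ → ℤ)
    (hper : ∀ i, a (i + n) = a i) (hpos : ∀ i, 0 ≤ a i) (hk : 0 < klev n a)
    (v : ℤ → ℝ) (hv : v ∈ PiPoly n a) :
    (∃! q : Quotient (Relation.EqvGen.setoid (shiftRel n (ThetaGraph n a v))),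
      ∀ c : (ThetaGraph n a v).ConnectedComponent,
        Quotient.mk (Relation.EqvGen.setoid (shiftRel n (ThetaGraph n a v))) c = q →
        ((∀ M : ℤ, ∃ p : ℤ × ℤ,
            (ThetaGraph n a v).connectedComponentMk p = c ∧ M ≤ p.1) ∧
         ∃ N : ℤ, ∀ i : ℤ, N ≤ i →
           Nat.card {p : ℤ × ℤ //
             (ThetaGraph n a v).connectedComponentMk p = c ∧ p.1 = i} = 1)) ∧
    (∀ x ∈ coneAtPi n a v, ∀ c : (ThetaGraph n a v).ConnectedComponent,
      ((∀ M : ℤ, ∃ p : ℤ × ℤ,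
          (ThetaGraph n a v).connectedComponentMk p = c ∧ M ≤ p.1) →
        ∃ N : ℤ, ∀ p p' : ℤ × ℤ,
          (ThetaGraph n a v).connectedComponentMk p = c →
          (ThetaGraph n a v).connectedComponentMk p' = c →
          N ≤ p.1 → N ≤ p'.1 → sPatR n a x p = sPatR n a x p') ∧
      (∃ N : ℤ, ∀ p : ℤ × ℤ, (ThetaGraph n a v).connectedComponentMk p = c →
        p.1 ≤ N → sPatR n a x p = sPatR n a v p)) := by
  have hV : v ∈ Vspace n a := hv.1
  obtain ⟨B, hB⟩ := hV.1
  have hc₀ : HasUnboundedRows _ ((ThetaGraph n a v).connectedComponentMk (B, -B)) :=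
    hasUnboundedRows_connectedComponentMk hV.2 hB (le_of_eq (by simp only [sIdx]; ring))
  refine ⟨⟨Quotient.mk _ ((ThetaGraph n a v).connectedComponentMk (B, -B)), fun c hc => ?_,
    fun q hq => ?_⟩, fun x hx c => ⟨fun hc => ?_, ?_⟩⟩
  · have hc' := (hasUnboundedRows_iff_of_eqvGen (Quotient.exact hc)).2 hc₀
    exact ⟨hc', exists_card_row_eq_one hper hpos hk hV hc'⟩
  · obtain ⟨c, rfl⟩ := Quotient.exists_rep q
    exact Quotient.sound (eqvGen_shiftRel_of_hasUnboundedRows hper hpos hk hV (hq c rfl).1 hc₀)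
  · exact sPatR_eq_of_hasUnboundedRows hper hpos hk hV hc (mem_Vspace_of_mem_coneAtPi hV hx)
  · obtain ⟨K, hK⟩ := exists_eq_left_of_mem_coneAtPi hV hx
    obtain ⟨N, hN⟩ := exists_sIdx_le_of_fst_le hper hpos hk hV c K
    exact ⟨N, fun p hp hpN => sPatR_congr fun l hl => hK l (hl.trans (hN p hp hpN))⟩

/-- For a vertex `v` of `Π`: exactly one shift-equivalence class of connected components
of `Θ(v)` (i.e. exactly one of the `m(λ)` components of `Δ_v`) contains vertices `(i,j)`
with arbitrarily large row index `i`, and its components contain exactly one vertex in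
each sufficiently high-numbered row.  Moreover, for every point `x` of the tangent cone
`C_v`, all coordinates `s_{i,j}(x)` on that component with `i` sufficiently large are
equal, and `s_{i,j}(x) = s_{i,j}(v)` on each component for `i` sufficiently small. -/
theorem stmt19 (n : ℕ) (hn : 2 ≤ n) (a : ℤ → ℤ)
    (hper : ∀ i, a (i + n) = a i) (hpos : ∀ i, 0 ≤ a i) (hk : 0 < klev n a)
    (v : ℤ → ℝ) (hv : v ∈ PiPoly n a) (hvert : IsVertexPi n a v) :
    (∃! q : Quotient (Relation.EqvGen.setoid (shiftRel n (ThetaGraph n a v))),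
      ∀ c : (ThetaGraph n a v).ConnectedComponent,
        Quotient.mk (Relation.EqvGen.setoid (shiftRel n (ThetaGraph n a v))) c = q →
        ((∀ M : ℤ, ∃ p : ℤ × ℤ,
            (ThetaGraph n a v).connectedComponentMk p = c ∧ M ≤ p.1) ∧
         ∃ N : ℤ, ∀ i : ℤ, N ≤ i →
           Nat.card {p : ℤ × ℤ //
             (ThetaGraph n a v).connectedComponentMk p = c ∧ p.1 = i} = 1)) ∧
    (∀ x ∈ coneAtPi n a v, ∀ c : (ThetaGraph n a v).ConnectedComponent,
      ((∀ M : ℤ, ∃ p : ℤ × ℤ,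
          (ThetaGraph n a v).connectedComponentMk p = c ∧ M ≤ p.1) →
        ∃ N : ℤ, ∀ p p' : ℤ × ℤ,
          (ThetaGraph n a v).connectedComponentMk p = c →
          (ThetaGraph n a v).connectedComponentMk p' = c →
          N ≤ p.1 → N ≤ p'.1 → sPatR n a x p = sPatR n a x p') ∧
      (∃ N : ℤ, ∀ p : ℤ × ℤ, (ThetaGraph n a v).connectedComponentMk p = c →
        p.1 ≤ N → sPatR n a x p = sPatR n a v p)) :=
  stmt19_general n a hper hpos hk v hv
end
end
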